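/- (Reverse Poincaré inequality) Let (X,Q,π) be a finite Markov chain, θ a mean with θ(r,s) ≤ (r+s)/2 for all r,s ≥ 0, K ∈ ℝ and ν ∈ [0,∞) (ν = 1/n). Suppose X satisfies CD_θ(K,n), i.e. B_ρ(f) ≥ K A_ρ(f) + ν ⟨ρ, (Δf)²⟩_π for all ρ : X → I_θ and f : X → ℝ. Then for all ρ : X → I_θ, f : X → ℝ and t ≥ 0: ⟨f², P_t ρ⟩_π − ⟨(P_t f)², ρ⟩_π ≥ (2 ∫₀ᵗ e^{2Ks} ds) A_ρ(P_t f) + (4ν ∫₀ᵗ ∫₀^s e^{2Ku} du ds) ⟨ρ, (Δ P_t f)²⟩_π. (For K ≠ 0 the two constants equal (e^{2Kt}−1)/K and (ν/K)((e^{2Kt}−1)/K − 2t); in particular CD_θ(0,∞) implies ⟨f², P_t ρ⟩_π ≥ 2t A_ρ(P_t f).) -/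

import Mathlib

open Finset

/-- Partial derivative of a mean in its first variable. -/
noncomputable def d1 (θ : ℝ → ℝ → ℝ) (r s : ℝ) : ℝ := deriv (fun u => θ u s) r

/-- A mean: nonnegative, continuous on `[0,∞)²`, smooth on `(0,∞)²`, symmetric,
monotone, homogeneous, normalized. -/
def IsMean (θ : ℝ → ℝ → ℝ) : Prop :=
  (∀ r s, 0 ≤ r → 0 ≤ s → 0 ≤ θ r s) ∧
  ContinuousOn (fun p : ℝ × ℝ => θ p.1 p.2) (Set.Ici 0 ×ˢ Set.Ici 0) ∧
  ContDiffOn ℝ (⊤ : ℕ∞) (fun p : ℝ × ℝ => θ p.1 p.2) (Set.Ioi 0 ×ˢ Set.Ioi 0) ∧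
  (∀ r s, θ r s = θ s r) ∧
  (∀ r s t : ℝ, 0 ≤ s → 0 ≤ t → t ≤ r → θ t s ≤ θ r s) ∧
  (∀ l r s : ℝ, 0 < l → 0 ≤ r → 0 ≤ s → θ (l * r) (l * s) = l * θ r s) ∧
  θ 1 1 = 1

/-- The domain `I_θ`: `(0,∞)` if `θ(0,s) = 0` for `s > 0`, and `[0,∞)` if
`θ(0,s) > 0` for `s > 0` (in which case `θ` is additionally `C¹` on `[0,∞)²`). -/
def MeanDom (θ : ℝ → ℝ → ℝ) (I : Set ℝ) : Prop :=
  ((∀ s > 0, θ 0 s = 0) ∧ I = Set.Ioi 0) ∨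
  ((∀ s > 0, 0 < θ 0 s) ∧ I = Set.Ici 0 ∧
    ContDiffOn ℝ 1 (fun p : ℝ × ℝ => θ p.1 p.2) (Set.Ici 0 ×ˢ Set.Ici 0))

/-- The Markov chain Laplacian `Δf(x) = ∑_y Q(x,y)(f(y) - f(x))`. -/
def lap {X : Type*} [Fintype X] (Q : X → X → ℝ) (f : X → ℝ) : X → ℝ :=
  fun x => ∑ y, Q x y * (f y - f x)

/-- `Γ_ρ(f,g)(x) = ∑_y ∂₁θ(ρ(x),ρ(y)) (f(y)-f(x))(g(y)-g(x)) Q(x,y)`. -/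
noncomputable def gamRhoBil {X : Type*} [Fintype X] (Q : X → X → ℝ) (θ : ℝ → ℝ → ℝ)
    (ρ f g : X → ℝ) : X → ℝ :=
  fun x => ∑ y, d1 θ (ρ x) (ρ y) * (f y - f x) * (g y - g x) * Q x y

/-- `Γ_ρ f := Γ_ρ(f,f)`. -/
noncomputable def gamRho {X : Type*} [Fintype X] (Q : X → X → ℝ) (θ : ℝ → ℝ → ℝ)
    (ρ f : X → ℝ) : X → ℝ :=
  gamRhoBil Q θ ρ f f

/-- `Γ_{2,ρ} f := ½ Δ(Γ_ρ f) - Γ_ρ(f, Δf)`. -/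
noncomputable def gamRho2 {X : Type*} [Fintype X] (Q : X → X → ℝ) (θ : ℝ → ℝ → ℝ)
    (ρ f : X → ℝ) : X → ℝ :=
  fun x => (1/2) * lap Q (gamRho Q θ ρ f) x - gamRhoBil Q θ ρ f (lap Q f) x


/-- The Laplacian as a linear map. -/
def lapL {X : Type*} [Fintype X] (Q : X → X → ℝ) : (X → ℝ) →ₗ[ℝ] (X → ℝ) where
  toFun := lap Q
  map_add' f g := by
    funext x
    simp only [lap, Pi.add_apply]
    rw [← Finset.sum_add_distrib]
    exact Finset.sum_congr rfl fun y _ => by ring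
  map_smul' c f := by
    funext x
    simp only [lap, Pi.smul_apply, smul_eq_mul, RingHom.id_apply]
    rw [Finset.mul_sum]
    exact Finset.sum_congr rfl fun y _ => by ring

/-- The heat semigroup `P_t = e^{tΔ}`. -/
noncomputable def heat {X : Type*} [Fintype X] [DecidableEq X]
    (Q : X → X → ℝ) (t : ℝ) (f : X → ℝ) : X → ℝ :=
  NormedSpace.exp (t • (LinearMap.toContinuousLinearMap (lapL Q))) f

/-- `A_ρ(f) = ½ ∑_{x,y} θ(ρ(x),ρ(y)) (f(y)-f(x))² Q(x,y) π(x)`. -/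
noncomputable def Afun {X : Type*} [Fintype X] (Q : X → X → ℝ) (pr : X → ℝ) (θ : ℝ → ℝ → ℝ)
    (ρ f : X → ℝ) : ℝ :=
  (1/2) * ∑ x, ∑ y, θ (ρ x) (ρ y) * (f y - f x)^2 * Q x y * pr x

/-- `B_ρ(f)` from the integrated Bochner formula. -/
noncomputable def Bfun {X : Type*} [Fintype X] (Q : X → X → ℝ) (pr : X → ℝ)
    (θ : ℝ → ℝ → ℝ) (ρ f : X → ℝ) : ℝ :=
  (1/4) * ∑ x, ∑ y, (d1 θ (ρ x) (ρ y) * lap Q ρ x + d1 θ (ρ y) (ρ x) * lap Q ρ y)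
      * (f y - f x)^2 * Q x y * pr x
  - (1/2) * ∑ x, ∑ y, θ (ρ x) (ρ y) * (f y - f x) * (lap Q f y - lap Q f x)
      * Q x y * pr x

set_option linter.unusedSectionVars false

section Infra

open NormedSpace

variable {X : Type*} [Fintype X] [DecidableEq X]

noncomputable def lapC (Q : X → X → ℝ) : (X → ℝ) →L[ℝ] (X → ℝ) :=
  LinearMap.toContinuousLinearMap (lapL Q)

@[simp] lemma lapC_apply (Q : X → X → ℝ) (f : X → ℝ) : lapC Q f = lap Q f := rfl

lemma heat_def (Q : X → X → ℝ) (t : ℝ) (f : X → ℝ) :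
    heat Q t f = exp (t • lapC Q) f := rfl

/-- evaluation CLM `T ↦ T f x` -/
noncomputable def evC (f : X → ℝ) (x : X) : ((X → ℝ) →L[ℝ] (X → ℝ)) →L[ℝ] ℝ :=
  (ContinuousLinearMap.proj x).comp ((ContinuousLinearMap.apply ℝ (X → ℝ)) f)

@[simp] lemma evC_apply (f : X → ℝ) (x : X) (T : (X → ℝ) →L[ℝ] (X → ℝ)) :
    evC f x T = T f x := rfl

lemma heat_zero (Q : X → X → ℝ) (f : X → ℝ) : heat Q 0 f = f := by
  rw [heat_def, zero_smul, exp_zero]; rfl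

lemma heat_heat (Q : X → X → ℝ) (s u : ℝ) (f : X → ℝ) :
    heat Q s (heat Q u f) = heat Q (s + u) f := by
  letI : NormedAlgebra ℚ ((X → ℝ) →L[ℝ] (X → ℝ)) := NormedAlgebra.restrictScalars ℚ ℝ _
  rw [heat_def, heat_def, heat_def, ← ContinuousLinearMap.mul_apply, ← exp_add_of_commute]
  · rw [← add_smul]
  · exact (Commute.refl (lapC Q)).smul_left s |>.smul_right u

lemma lap_heat (Q : X → X → ℝ) (s : ℝ) (f : X → ℝ) :
    lap Q (heat Q s f) = heat Q s (lap Q f) := by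
  have h : Commute (lapC Q) (exp (s • lapC Q)) :=
    ((Commute.refl (lapC Q)).smul_right s).exp_right
  have h2 : (lapC Q * exp (s • lapC Q)) f = (exp (s • lapC Q) * lapC Q) f := by
    rw [h.eq]
  simpa [ContinuousLinearMap.mul_apply, heat_def] using h2

lemma hasDerivAt_heat (Q : X → X → ℝ) (f : X → ℝ) (x : X) (s : ℝ) :
    HasDerivAt (fun u => heat Q u f x) (lap Q (heat Q s f) x) s := by
  have h := hasDerivAt_exp_smul_const (𝕂 := ℝ) (lapC Q) s
  have h2 := (evC f x).hasFDerivAt.comp_hasDerivAt s h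
  have h3 : evC f x (exp (s • lapC Q) * lapC Q) = lap Q (heat Q s f) x := by
    rw [evC_apply, ContinuousLinearMap.mul_apply, lap_heat]
    rfl
  rw [h3] at h2
  exact h2

end Infra
section Pos

open NormedSpace

variable {X : Type*} [Fintype X] [DecidableEq X]

/-- Markov averaging operator. -/
noncomputable def mkC (Q : X → X → ℝ) : (X → ℝ) →L[ℝ] (X → ℝ) :=
  LinearMap.toContinuousLinearMap
    { toFun := fun f x => ∑ y, Q x y * f y
      map_add' := fun f g => by
        funext x
        simp only [Pi.add_apply]
        rw [← Finset.sum_add_distrib]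
        exact Finset.sum_congr rfl fun y _ => by ring
      map_smul' := fun c f => by
        funext x
        simp only [Pi.smul_apply, smul_eq_mul, RingHom.id_apply]
        rw [Finset.mul_sum]
        exact Finset.sum_congr rfl fun y _ => by ring }

@[simp] lemma mkC_apply (Q : X → X → ℝ) (f : X → ℝ) (x : X) :
    mkC Q f x = ∑ y, Q x y * f y := rfl

lemma lapC_eq (Q : X → X → ℝ) (hQrow : ∀ x, ∑ y, Q x y = 1) :
    lapC Q = mkC Q - 1 := by
  ext f x
  simp only [lapC_apply, lap, ContinuousLinearMap.sub_apply, ContinuousLinearMap.one_apply,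
    mkC_apply, Pi.sub_apply]
  have h : (∑ y, Q x y * (f y - f x)) = (∑ y, Q x y * f y) - (∑ y, Q x y) * f x := by
    rw [Finset.sum_mul, ← Finset.sum_sub_distrib]
    exact Finset.sum_congr rfl fun y _ => by ring
  rw [h, hQrow, one_mul]

lemma mkC_pow_nonneg (Q : X → X → ℝ) (hQ : ∀ x y, 0 ≤ Q x y) (n : ℕ) : ∀ (ρ : X → ℝ),
    (∀ x, 0 ≤ ρ x) → ∀ x, 0 ≤ ((mkC Q) ^ n) ρ x := by
  induction n with
  | zero => intro ρ hρ; simpa using hρ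
  | succ n ih =>
    intro ρ hρ x
    have h : ((mkC Q) ^ (n+1)) ρ = ((mkC Q) ^ n) (mkC Q ρ) := by
      rw [pow_succ, ContinuousLinearMap.mul_apply]
    rw [h]
    exact ih (mkC Q ρ) (fun z => Finset.sum_nonneg fun y _ =>
      mul_nonneg (hQ z y) (hρ y)) x

lemma heat_expansion (Q : X → X → ℝ) (hQrow : ∀ x, ∑ y, Q x y = 1) (s : ℝ) (ρ : X → ℝ) (x : X) :
    heat Q s ρ x = Real.exp (-s) * ∑' n : ℕ, ((n.factorial : ℝ)⁻¹ * s ^ n * ((mkC Q) ^ n) ρ x) := by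
  have hcomm : Commute ((-s) • (1 : (X → ℝ) →L[ℝ] (X → ℝ))) (s • mkC Q) :=
    ((Commute.one_left (mkC Q)).smul_left (-s)).smul_right s
  have hdecomp : s • lapC Q = (-s) • (1 : (X → ℝ) →L[ℝ] (X → ℝ)) + s • mkC Q := by
    rw [lapC_eq Q hQrow, smul_sub]
    rw [show (-s) • (1 : (X → ℝ) →L[ℝ] (X → ℝ)) = -(s • 1) from neg_smul s ((1 : (X → ℝ) →L[ℝ] (X → ℝ)))]
    abel
  have h1 : heat Q s ρ = (exp ((-s) • (1 : (X → ℝ) →L[ℝ] (X → ℝ))) * exp (s • mkC Q)) ρ := by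
    letI : NormedAlgebra ℚ ((X → ℝ) →L[ℝ] (X → ℝ)) := NormedAlgebra.restrictScalars ℚ ℝ _
    rw [heat_def, hdecomp, exp_add_of_commute hcomm]
  have hs1 : exp ((-s) • (1 : (X → ℝ) →L[ℝ] (X → ℝ))) = Real.exp (-s) • 1 := by
    rw [← Algebra.algebraMap_eq_smul_one, ← map_exp (algebraMap ℝ ((X → ℝ) →L[ℝ] (X → ℝ)))
      (continuous_algebraMap ℝ _), Algebra.algebraMap_eq_smul_one, Real.exp_eq_exp_ℝ]
  have h2 : heat Q s ρ x = Real.exp (-s) * (exp (s • mkC Q) ρ x) := by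
    rw [h1, hs1]
    simp [ContinuousLinearMap.mul_apply]
  rw [h2]
  congr 1
  have h3 : exp (s • mkC Q) = ∑' n : ℕ, ((n.factorial : ℝ)⁻¹ • (s • mkC Q) ^ n) := by
    rw [exp_eq_tsum ℝ]
  have h4 := (evC ρ x).map_tsum (expSeries_summable' (𝕂 := ℝ) (s • mkC Q))
  rw [← h3] at h4
  rw [show (exp (s • mkC Q)) ρ x = evC ρ x (exp (s • mkC Q)) from rfl, h4]
  congr 1
  funext n
  rw [show ((n.factorial : ℝ)⁻¹ • (s • mkC Q) ^ n) = ((n.factorial : ℝ)⁻¹ * s ^ n) • (mkC Q) ^ n by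
    rw [smul_pow, smul_smul]]
  simp only [ContinuousLinearMap.smul_apply, evC_apply, Pi.smul_apply, smul_eq_mul]

end Pos
set_option synthInstance.maxHeartbeats 1000000

section Pos2

open NormedSpace

variable {X : Type*} [Fintype X] [DecidableEq X]

lemma heat_tsum (Q : X → X → ℝ) (s : ℝ) (f : X → ℝ) (x : X) :
    heat Q s f x = ∑' n : ℕ, ((n.factorial : ℝ)⁻¹ * s ^ n * ((lapC Q) ^ n) f x) := by
  have h3 : exp (s • lapC Q) = ∑' n : ℕ, ((n.factorial : ℝ)⁻¹ • (s • lapC Q) ^ n) := by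
    rw [exp_eq_tsum ℝ]
  have h4 := (evC f x).map_tsum (expSeries_summable' (𝕂 := ℝ) (s • lapC Q))
  rw [← h3] at h4
  rw [heat_def, show (exp (s • lapC Q)) f x = evC f x (exp (s • lapC Q)) from rfl, h4]
  congr 1
  funext n
  rw [show ((n.factorial : ℝ)⁻¹ • (s • lapC Q) ^ n) = ((n.factorial : ℝ)⁻¹ * s ^ n) • (lapC Q) ^ n
    by rw [smul_pow, smul_smul]]
  simp only [ContinuousLinearMap.smul_apply, evC_apply, Pi.smul_apply, smul_eq_mul]

lemma heat_one (Q : X → X → ℝ) (hQrow : ∀ x, ∑ y, Q x y = 1) (s : ℝ) :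
    heat Q s (fun _ => (1 : ℝ)) = fun _ => 1 := by
  have hl : lapC Q (fun _ => (1 : ℝ)) = 0 := by
    funext x
    simp [lapC_apply, lap]
  funext x
  rw [heat_tsum]
  rw [tsum_eq_single 0]
  · simp
  · intro n hn
    obtain ⟨m, rfl⟩ := Nat.exists_eq_succ_of_ne_zero hn
    have : ((lapC Q) ^ (m+1)) (fun _ => (1:ℝ)) = 0 := by
      rw [pow_succ, ContinuousLinearMap.mul_apply, hl, map_zero]
    rw [this]
    simp

lemma heat_summable (Q : X → X → ℝ) (s : ℝ) (ρ : X → ℝ) (x : X) :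
    Summable (fun n : ℕ => (n.factorial : ℝ)⁻¹ * s ^ n * ((mkC Q) ^ n) ρ x) := by
  have h := (expSeries_summable' (𝕂 := ℝ) (s • mkC Q)).map
    ((evC ρ x).toLinearMap.toAddMonoidHom) (evC ρ x).continuous
  refine h.congr fun n => ?_
  show evC ρ x ((n.factorial : ℝ)⁻¹ • (s • mkC Q) ^ n) = _
  rw [show ((n.factorial : ℝ)⁻¹ • (s • mkC Q) ^ n) = ((n.factorial : ℝ)⁻¹ * s ^ n) • (mkC Q) ^ n
    by rw [smul_pow, smul_smul]]
  simp only [ContinuousLinearMap.smul_apply, evC_apply, Pi.smul_apply, smul_eq_mul]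

lemma heat_ge (Q : X → X → ℝ) (hQ : ∀ x y, 0 ≤ Q x y) (hQrow : ∀ x, ∑ y, Q x y = 1)
    {s : ℝ} (hs : 0 ≤ s) {ρ : X → ℝ} (hρ : ∀ x, 0 ≤ ρ x) (x : X) :
    Real.exp (-s) * ρ x ≤ heat Q s ρ x := by
  rw [heat_expansion Q hQrow]
  have key : ρ x ≤ ∑' n : ℕ, ((n.factorial : ℝ)⁻¹ * s ^ n * ((mkC Q) ^ n) ρ x) := by
    have h0 : ((Nat.factorial 0 : ℝ))⁻¹ * s ^ 0 * ((mkC Q) ^ 0) ρ x = ρ x := by simp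
    rw [← h0]
    refine Summable.le_tsum (heat_summable Q s ρ x) 0 fun j _ => ?_
    exact mul_nonneg (mul_nonneg (inv_nonneg.2 (Nat.cast_nonneg _)) (pow_nonneg hs _))
      (mkC_pow_nonneg Q hQ j ρ hρ x)
  exact mul_le_mul_of_nonneg_left key (Real.exp_nonneg _)

lemma heat_nonneg (Q : X → X → ℝ) (hQ : ∀ x y, 0 ≤ Q x y) (hQrow : ∀ x, ∑ y, Q x y = 1)
    {s : ℝ} (hs : 0 ≤ s) {ρ : X → ℝ} (hρ : ∀ x, 0 ≤ ρ x) (x : X) :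
    0 ≤ heat Q s ρ x :=
  le_trans (mul_nonneg (Real.exp_nonneg _) (hρ x)) (heat_ge Q hQ hQrow hs hρ x)

lemma heat_pos (Q : X → X → ℝ) (hQ : ∀ x y, 0 ≤ Q x y) (hQrow : ∀ x, ∑ y, Q x y = 1)
    {s : ℝ} (hs : 0 ≤ s) {ρ : X → ℝ} (hρ : ∀ x, 0 < ρ x) (x : X) :
    0 < heat Q s ρ x :=
  lt_of_lt_of_le (mul_pos (Real.exp_pos _) (hρ x)) (heat_ge Q hQ hQrow hs (fun z => (hρ z).le) x)

end Pos2
section Adj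

variable {X : Type*} [Fintype X] [DecidableEq X]

/-- generic symmetrization: swap the roles of `x,y` using reversibility. -/
lemma swap_sum (Q : X → X → ℝ) (pr : X → ℝ)
    (hrev : ∀ x y, pr x * Q x y = pr y * Q y x) (H : X → X → ℝ) :
    ∑ x, ∑ y, H x y * Q x y * pr x = ∑ x, ∑ y, H y x * Q x y * pr x := by
  rw [Finset.sum_comm]
  refine Finset.sum_congr rfl fun x _ => Finset.sum_congr rfl fun y _ => ?_
  calc H y x * Q y x * pr y = H y x * (pr y * Q y x) := by ring
    _ = H y x * (pr x * Q x y) := by rw [← hrev]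
    _ = H y x * Q x y * pr x := by ring

lemma lap_symm (Q : X → X → ℝ) (pr : X → ℝ)
    (hrev : ∀ x y, pr x * Q x y = pr y * Q y x) (f g : X → ℝ) :
    ∑ x, lap Q f x * g x * pr x = ∑ x, f x * lap Q g x * pr x := by
  have expand : ∀ a b : X → ℝ, ∑ x, lap Q a x * b x * pr x
      = (∑ x, ∑ y, (a y * b x) * Q x y * pr x) - ∑ x, ∑ y, (a x * b x) * Q x y * pr x := by
    intro a b
    rw [← Finset.sum_sub_distrib]
    refine Finset.sum_congr rfl fun x _ => ?_
    rw [lap, Finset.sum_mul, Finset.sum_mul, ← Finset.sum_sub_distrib]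
    exact Finset.sum_congr rfl fun y _ => by ring
  have expand2 : ∀ a b : X → ℝ, ∑ x, a x * lap Q b x * pr x
      = (∑ x, ∑ y, (a x * b y) * Q x y * pr x) - ∑ x, ∑ y, (a x * b x) * Q x y * pr x := by
    intro a b
    rw [← Finset.sum_sub_distrib]
    refine Finset.sum_congr rfl fun x _ => ?_
    rw [lap, Finset.mul_sum, Finset.sum_mul, ← Finset.sum_sub_distrib]
    exact Finset.sum_congr rfl fun y _ => by ring
  rw [expand f g, expand2 f g, swap_sum Q pr hrev (fun x y => f y * g x)]

lemma heat_symm (Q : X → X → ℝ) (pr : X → ℝ)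
    (hrev : ∀ x y, pr x * Q x y = pr y * Q y x) (s : ℝ) (f g : X → ℝ) :
    ∑ x, heat Q s f x * g x * pr x = ∑ x, f x * heat Q s g x * pr x := by
  set φ : ℝ → ℝ := fun u => ∑ x, heat Q u f x * heat Q (s - u) g x * pr x with hφ
  have hder : ∀ u, HasDerivAt φ 0 u := by
    intro u
    have hterm : ∀ x : X, HasDerivAt (fun u => heat Q u f x * heat Q (s - u) g x * pr x)
        ((lap Q (heat Q u f) x * heat Q (s - u) g x
          + heat Q u f x * (lap Q (heat Q (s - u) g) x * (-1))) * pr x) u := by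
      intro x
      have h1 : HasDerivAt (fun u => heat Q u f x) (lap Q (heat Q u f) x) u :=
        hasDerivAt_heat Q f x u
      have hin : HasDerivAt (fun u : ℝ => s - u) (-1) u := by
        simpa using (hasDerivAt_id u).const_sub s
      have h2 : HasDerivAt (fun u => heat Q (s - u) g x)
          (lap Q (heat Q (s - u) g) x * (-1)) u :=
        HasDerivAt.comp u (hasDerivAt_heat Q g x (s - u)) hin
      exact (h1.mul h2).mul_const (pr x)
    have hsum : HasDerivAt (fun u => ∑ x, heat Q u f x * heat Q (s - u) g x * pr x)
        (∑ x, (lap Q (heat Q u f) x * heat Q (s - u) g x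
          + heat Q u f x * (lap Q (heat Q (s - u) g) x * (-1))) * pr x) u :=
      HasDerivAt.fun_sum (fun x _ => hterm x)
    have hzero : ∑ x, (lap Q (heat Q u f) x * heat Q (s - u) g x
        + heat Q u f x * (lap Q (heat Q (s - u) g) x * (-1))) * pr x = 0 := by
      have hsplit : ∑ x, (lap Q (heat Q u f) x * heat Q (s - u) g x
          + heat Q u f x * (lap Q (heat Q (s - u) g) x * (-1))) * pr x
          = (∑ x, lap Q (heat Q u f) x * heat Q (s - u) g x * pr x)
            - ∑ x, heat Q u f x * lap Q (heat Q (s - u) g) x * pr x := by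
        rw [← Finset.sum_sub_distrib]
        exact Finset.sum_congr rfl fun x _ => by ring
      rw [hsplit, lap_symm Q pr hrev, sub_self]
    rw [← hzero]
    exact hsum
  have hconst : φ s = φ 0 := by
    apply is_const_of_deriv_eq_zero (f := φ)
    · exact fun u => (hder u).differentiableAt
    · exact fun u => (hder u).deriv
  have h1 : φ s = ∑ x, heat Q s f x * g x * pr x := by
    simp only [hφ, sub_self]
    exact Finset.sum_congr rfl fun x _ => by rw [heat_zero]
  have h2 : φ 0 = ∑ x, f x * heat Q s g x * pr x := by
    simp only [hφ, sub_zero]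
    exact Finset.sum_congr rfl fun x _ => by rw [heat_zero]
  rw [← h1, ← h2, hconst]

lemma heat_sq_le (Q : X → X → ℝ) (hQ : ∀ x y, 0 ≤ Q x y) (hQrow : ∀ x, ∑ y, Q x y = 1)
    {s : ℝ} (hs : 0 ≤ s) (f : X → ℝ) (x : X) :
    (heat Q s f x) ^ 2 ≤ heat Q s (fun y => (f y) ^ 2) x := by
  set δ : X → X → ℝ := fun y => fun z => if z = y then 1 else 0 with hδ
  set k : X → ℝ := fun y => heat Q s (δ y) x with hk
  have hk0 : ∀ y, 0 ≤ k y := fun y =>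
    heat_nonneg Q hQ hQrow hs (fun z => by by_cases h : z = y <;> simp [hδ, h]) x
  have hrepr : ∀ g : X → ℝ, heat Q s g x = ∑ y, g y * k y := by
    intro g
    have hg : g = ∑ y, g y • δ y := by
      funext z
      simp only [Finset.sum_apply, Pi.smul_apply, smul_eq_mul, hδ]
      rw [Finset.sum_congr rfl (fun y _ => by rw [mul_ite, mul_one, mul_zero]),
        Finset.sum_ite_eq Finset.univ z g]
      simp
    conv_lhs => rw [hg]
    rw [heat_def, map_sum]
    simp only [map_smul, Finset.sum_apply, Pi.smul_apply, smul_eq_mul]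
    rfl
  have hsumk : ∑ y, k y = 1 := by
    have h1 : heat Q s (fun _ => (1:ℝ)) x = ∑ y, (1:ℝ) * k y := hrepr (fun _ => 1)
    rw [heat_one Q hQrow] at h1
    simpa using h1.symm
  rw [hrepr f, hrepr (fun y => f y ^ 2)]
  have hcs := Finset.sum_sq_le_sum_mul_sum_of_sq_eq_mul Finset.univ
    (r := fun y => f y * k y) (f := fun y => k y) (g := fun y => f y ^ 2 * k y)
    (fun i _ => hk0 i) (fun i _ => mul_nonneg (sq_nonneg _) (hk0 i))
    (fun i _ => by ring)
  rw [hsumk, one_mul] at hcs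
  calc (∑ y, f y * k y) ^ 2 ≤ ∑ y, f y ^ 2 * k y := hcs
    _ = ∑ y, f y ^ 2 * k y := rfl

end Adj
section CalcTools

open Set intervalIntegral

lemma theta_chain {θ : ℝ → ℝ → ℝ}
    (hsm : ContDiffOn ℝ (⊤ : ℕ∞) (fun p : ℝ × ℝ => θ p.1 p.2) (Set.Ioi 0 ×ˢ Set.Ioi 0))
    (hsymm : ∀ r s, θ r s = θ s r)
    {p q : ℝ → ℝ} {p' q' s : ℝ} (hp : HasDerivAt p p' s) (hq : HasDerivAt q q' s)
    (hppos : 0 < p s) (hqpos : 0 < q s) :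
    HasDerivAt (fun u => θ (p u) (q u))
      (d1 θ (p s) (q s) * p' + d1 θ (q s) (p s) * q') s := by
  set θ' : ℝ × ℝ → ℝ := fun z => θ z.1 z.2 with hθ'
  have hmem : (p s, q s) ∈ Set.Ioi (0:ℝ) ×ˢ Set.Ioi (0:ℝ) := ⟨hppos, hqpos⟩
  have hopen : IsOpen (Set.Ioi (0:ℝ) ×ˢ Set.Ioi (0:ℝ)) := isOpen_Ioi.prod isOpen_Ioi
  have hdiff : DifferentiableAt ℝ θ' (p s, q s) :=
    (hsm.contDiffAt (hopen.mem_nhds hmem)).differentiableAt (by simp)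
  have hF : HasFDerivAt θ' (fderiv ℝ θ' (p s, q s)) (p s, q s) := hdiff.hasFDerivAt
  set D := fderiv ℝ θ' (p s, q s) with hD
  have hc : HasDerivAt (fun u => (p u, q u)) (p', q') s := hp.prodMk hq
  have hcomp : HasDerivAt (fun u => θ' (p u, q u)) (D (p', q')) s :=
    hF.comp_hasDerivAt (l := θ') s hc
  have hd1 : D (1, 0) = d1 θ (p s) (q s) := by
    have h1 : HasDerivAt (fun r : ℝ => (r, q s)) ((1:ℝ), (0:ℝ)) (p s) :=
      (hasDerivAt_id (p s)).prodMk (hasDerivAt_const (p s) (q s))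
    have h2 : HasDerivAt (fun r => θ r (q s)) (D (1, 0)) (p s) :=
      hF.comp_hasDerivAt (l := θ') (p s) h1
    exact (h2.deriv).symm
  have hd2 : D (0, 1) = d1 θ (q s) (p s) := by
    have h1 : HasDerivAt (fun r : ℝ => (p s, r)) ((0:ℝ), (1:ℝ)) (q s) :=
      (hasDerivAt_const (q s) (p s)).prodMk (hasDerivAt_id (q s))
    have h2 : HasDerivAt (fun r => θ (p s) r) (D (0, 1)) (q s) :=
      hF.comp_hasDerivAt (q s) h1
    have h3 : (fun r => θ (p s) r) = fun r => θ r (p s) := funext fun r => hsymm (p s) r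
    rw [h3] at h2
    exact (h2.deriv).symm
  have hdecomp : D (p', q') = d1 θ (p s) (q s) * p' + d1 θ (q s) (p s) * q' := by
    have : (p', q') = p' • ((1:ℝ), (0:ℝ)) + q' • ((0:ℝ), (1:ℝ)) := by
      simp [Prod.ext_iff]
    rw [this, map_add, map_smul, map_smul, hd1, hd2, smul_eq_mul, smul_eq_mul]
    ring
  rw [← hdecomp]
  exact hcomp

/-- monotone-from-derivative helper on `[0,t]`. -/
lemma mono_of_deriv {F F' : ℝ → ℝ} {t : ℝ}
    (hF : ∀ s ∈ Set.Icc (0:ℝ) t, HasDerivAt F (F' s) s)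
    (hF' : ∀ s ∈ Set.Icc (0:ℝ) t, 0 ≤ F' s) :
    ∀ s ∈ Set.Icc (0:ℝ) t, F 0 ≤ F s := by
  intro s hs
  have hmono : MonotoneOn F (Set.Icc (0:ℝ) t) := by
    apply monotoneOn_of_deriv_nonneg (convex_Icc 0 t)
    · exact fun z hz => (hF z hz).continuousAt.continuousWithinAt
    · rw [interior_Icc]
      exact fun z hz => ((hF z (Ioo_subset_Icc_self hz)).differentiableAt).differentiableWithinAt
    · rw [interior_Icc]
      intro z hz
      rw [(hF z (Ioo_subset_Icc_self hz)).deriv]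
      exact hF' z (Ioo_subset_Icc_self hz)
  exact hmono (Set.left_mem_Icc.2 (hs.1.trans hs.2)) hs hs.1

lemma hasDerivAt_cInt (K : ℝ) (s : ℝ) :
    HasDerivAt (fun r : ℝ => ∫ u in (0:ℝ)..r, Real.exp (2*K*u)) (Real.exp (2*K*s)) s := by
  have hcont : Continuous fun u : ℝ => Real.exp (2*K*u) := by continuity
  exact intervalIntegral.integral_hasDerivAt_right
    (hcont.intervalIntegrable _ _)
    (hcont.stronglyMeasurableAtFilter _ _)
    hcont.continuousAt

lemma cInt_identity (K s : ℝ) :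
    2*K*(∫ u in (0:ℝ)..s, Real.exp (2*K*u)) = Real.exp (2*K*s) - 1 := by
  have hder : ∀ u ∈ Set.uIcc (0:ℝ) s,
      HasDerivAt (fun r : ℝ => Real.exp (2*K*r)) (Real.exp (2*K*u) * (2*K)) u := by
    intro u _
    have h1 : HasDerivAt (fun r : ℝ => 2*K*r) (2*K) u := by
      simpa using (hasDerivAt_id u).const_mul (2*K)
    exact h1.exp
  have hint : IntervalIntegrable (fun u : ℝ => Real.exp (2*K*u) * (2*K)) MeasureTheory.volume 0 s :=
    (by continuity : Continuous fun u : ℝ => Real.exp (2*K*u) * (2*K)).intervalIntegrable _ _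
  have h := intervalIntegral.integral_eq_sub_of_hasDerivAt hder hint
  rw [intervalIntegral.integral_mul_const] at h
  rw [mul_zero, Real.exp_zero] at h
  linarith [h]

lemma hasDerivAt_c2Int (K : ℝ) (s : ℝ) :
    HasDerivAt (fun r : ℝ => ∫ v in (0:ℝ)..r, (∫ u in (0:ℝ)..v, Real.exp (2*K*u)))
      (∫ u in (0:ℝ)..s, Real.exp (2*K*u)) s := by
  have hcont : Continuous fun v : ℝ => ∫ u in (0:ℝ)..v, Real.exp (2*K*u) :=
    continuous_iff_continuousAt.2 fun v => (hasDerivAt_cInt K v).continuousAt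
  exact intervalIntegral.integral_hasDerivAt_right
    (hcont.intervalIntegrable _ _)
    (hcont.stronglyMeasurableAtFilter _ _)
    hcont.continuousAt

end CalcTools
section Main

set_option maxHeartbeats 1000000

variable {X : Type*} [Fintype X] [DecidableEq X]

lemma lap_sq (Q : X → X → ℝ) (v : X → ℝ) (x : X) :
    lap Q (fun z => v z ^ 2) x - 2 * v x * lap Q v x = ∑ y, Q x y * (v y - v x)^2 := by
  rw [lap, lap, Finset.mul_sum, ← Finset.sum_sub_distrib]
  refine Finset.sum_congr rfl fun y _ => ?_
  try simp only []
  ring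

lemma reverse_poincare_pos
    (Q : X → X → ℝ) (pr : X → ℝ)
    (hQ : ∀ x y, 0 ≤ Q x y) (hQrow : ∀ x, ∑ y, Q x y = 1)
    (hpr : ∀ x, 0 < pr x)
    (hrev : ∀ x y, pr x * Q x y = pr y * Q y x)
    (θ : ℝ → ℝ → ℝ)
    (hsm : ContDiffOn ℝ (⊤ : ℕ∞) (fun p : ℝ × ℝ => θ p.1 p.2) (Set.Ioi 0 ×ˢ Set.Ioi 0))
    (hsymm : ∀ r s, θ r s = θ s r)
    (hθa : ∀ r s : ℝ, 0 ≤ r → 0 ≤ s → θ r s ≤ (r + s) / 2)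
    (K : ℝ) (ν : ℝ) (hν : 0 ≤ ν)
    (hCD : ∀ ρ : X → ℝ, (∀ x, 0 < ρ x) → ∀ f : X → ℝ,
      Bfun Q pr θ ρ f ≥ K * Afun Q pr θ ρ f + ν * ∑ x, ρ x * (lap Q f x)^2 * pr x)
    (ρ : X → ℝ) (hρ : ∀ x, 0 < ρ x) (f : X → ℝ) (t : ℝ) (ht : 0 ≤ t) :
    (∑ x, (f x)^2 * heat Q t ρ x * pr x) - (∑ x, (heat Q t f x)^2 * ρ x * pr x)
      ≥ (2 * ∫ s in (0:ℝ)..t, Real.exp (2*K*s)) * Afun Q pr θ ρ (heat Q t f)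
        + (4 * ν * ∫ s in (0:ℝ)..t, ∫ u in (0:ℝ)..s, Real.exp (2*K*u))
            * ∑ x, ρ x * (lap Q (heat Q t f) x)^2 * pr x := by
  -- abbreviations
  set A₀ : ℝ := Afun Q pr θ ρ (heat Q t f) with hA₀
  set G : ℝ := ∑ x, ρ x * (lap Q (heat Q t f) x)^2 * pr x with hG
  set c : ℝ → ℝ := fun s => ∫ r in (0:ℝ)..s, Real.exp (2*K*r) with hc_def
  set c2 : ℝ → ℝ := fun s => ∫ r in (0:ℝ)..s, (∫ w in (0:ℝ)..r, Real.exp (2*K*w)) with hc2_def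
  set a : ℝ → ℝ := fun s => Afun Q pr θ (heat Q s ρ) (heat Q (t - s) f) with ha_def
  set gfn : ℝ → ℝ :=
    fun s => ∑ x, heat Q s ρ x * (lap Q (heat Q (t - s) f) x)^2 * pr x with hg_def
  set Φ : ℝ → ℝ := fun s => ∑ x, (heat Q (t - s) f x)^2 * heat Q s ρ x * pr x with hΦ_def
  -- basic positivity of the evolved density
  have hupos : ∀ s : ℝ, 0 ≤ s → ∀ x, 0 < heat Q s ρ x :=
    fun s hs x => heat_pos Q hQ hQrow hs hρ x
  -- derivatives of the two heat flows
  have hu_der : ∀ (s : ℝ) (x : X),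
      HasDerivAt (fun r => heat Q r ρ x) (lap Q (heat Q s ρ) x) s :=
    fun s x => hasDerivAt_heat Q ρ x s
  have hv_der : ∀ (s : ℝ) (x : X),
      HasDerivAt (fun r => heat Q (t - r) f x) (-(lap Q (heat Q (t - s) f) x)) s := by
    intro s x
    have hin : HasDerivAt (fun r : ℝ => t - r) (-1) s := by
      simpa using (hasDerivAt_id s).const_sub t
    have := HasDerivAt.comp s (hasDerivAt_heat Q f x (t - s)) hin
    simpa [mul_comm, Function.comp_def] using this
  -- derivative of `a`
  have ha : ∀ s ∈ Set.Icc (0:ℝ) t,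
      HasDerivAt a (2 * Bfun Q pr θ (heat Q s ρ) (heat Q (t - s) f)) s := by
    intro s hs
    have hterm : ∀ x y : X, HasDerivAt
        (fun r => θ (heat Q r ρ x) (heat Q r ρ y) * (heat Q (t - r) f y - heat Q (t - r) f x)^2
          * Q x y * pr x)
        (((d1 θ (heat Q s ρ x) (heat Q s ρ y) * lap Q (heat Q s ρ) x
            + d1 θ (heat Q s ρ y) (heat Q s ρ x) * lap Q (heat Q s ρ) y)
            * (heat Q (t - s) f y - heat Q (t - s) f x)^2
          + θ (heat Q s ρ x) (heat Q s ρ y)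
            * (((2:ℕ):ℝ) * (heat Q (t - s) f y - heat Q (t - s) f x)^1
              * (-(lap Q (heat Q (t - s) f) y) - -(lap Q (heat Q (t - s) f) x))))
          * Q x y * pr x) s := by
      intro x y
      have hθt := theta_chain hsm hsymm (hu_der s x) (hu_der s y)
        (hupos s hs.1 x) (hupos s hs.1 y)
      have hsq := ((hv_der s y).sub (hv_der s x)).pow 2
      exact ((hθt.mul hsq).mul_const (Q x y)).mul_const (pr x)
    have hsum : HasDerivAt
        (fun r => ∑ x, ∑ y, θ (heat Q r ρ x) (heat Q r ρ y)
          * (heat Q (t - r) f y - heat Q (t - r) f x)^2 * Q x y * pr x)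
        (∑ x, ∑ y, ((d1 θ (heat Q s ρ x) (heat Q s ρ y) * lap Q (heat Q s ρ) x
            + d1 θ (heat Q s ρ y) (heat Q s ρ x) * lap Q (heat Q s ρ) y)
            * (heat Q (t - s) f y - heat Q (t - s) f x)^2
          + θ (heat Q s ρ x) (heat Q s ρ y)
            * (((2:ℕ):ℝ) * (heat Q (t - s) f y - heat Q (t - s) f x)^1
              * (-(lap Q (heat Q (t - s) f) y) - -(lap Q (heat Q (t - s) f) x))))
          * Q x y * pr x) s :=
      HasDerivAt.fun_sum (fun x _ => HasDerivAt.fun_sum (fun y _ => hterm x y))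
    have hDa : HasDerivAt a ((1/2) * ∑ x, ∑ y,
        ((d1 θ (heat Q s ρ x) (heat Q s ρ y) * lap Q (heat Q s ρ) x
            + d1 θ (heat Q s ρ y) (heat Q s ρ x) * lap Q (heat Q s ρ) y)
            * (heat Q (t - s) f y - heat Q (t - s) f x)^2
          + θ (heat Q s ρ x) (heat Q s ρ y)
            * (((2:ℕ):ℝ) * (heat Q (t - s) f y - heat Q (t - s) f x)^1
              * (-(lap Q (heat Q (t - s) f) y) - -(lap Q (heat Q (t - s) f) x))))
          * Q x y * pr x) s := by
      rw [ha_def]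
      exact hsum.const_mul (1/2)
    have heq : (1/2) * (∑ x, ∑ y,
        ((d1 θ (heat Q s ρ x) (heat Q s ρ y) * lap Q (heat Q s ρ) x
            + d1 θ (heat Q s ρ y) (heat Q s ρ x) * lap Q (heat Q s ρ) y)
            * (heat Q (t - s) f y - heat Q (t - s) f x)^2
          + θ (heat Q s ρ x) (heat Q s ρ y)
            * (((2:ℕ):ℝ) * (heat Q (t - s) f y - heat Q (t - s) f x)^1
              * (-(lap Q (heat Q (t - s) f) y) - -(lap Q (heat Q (t - s) f) x))))
          * Q x y * pr x)
        = 2 * Bfun Q pr θ (heat Q s ρ) (heat Q (t - s) f) := by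
      have e1 : ∀ (s1 s2 : X → X → ℝ), (∑ x, ∑ y, (s1 x y - 2 * s2 x y))
          = (∑ x, ∑ y, s1 x y) - 2 * ∑ x, ∑ y, s2 x y := by
        intro s1 s2
        rw [Finset.mul_sum, ← Finset.sum_sub_distrib]
        refine Finset.sum_congr rfl fun x _ => ?_
        rw [Finset.mul_sum, ← Finset.sum_sub_distrib]
      rw [Bfun]
      rw [show ∀ A B : ℝ, 2 * ((1/4) * A - (1/2) * B) = (1/2) * (A - 2*B) from
        fun A B => by ring]
      rw [← e1]
      congr 1
      refine Finset.sum_congr rfl fun x _ => Finset.sum_congr rfl fun y _ => ?_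
      push_cast
      ring
    rw [heq] at hDa
    exact hDa
  -- derivative of `Φ`
  have hΦder : ∀ s : ℝ, HasDerivAt Φ
      (∑ x, (((2:ℕ):ℝ) * heat Q (t - s) f x ^ 1 * (-(lap Q (heat Q (t - s) f) x))
          * heat Q s ρ x + heat Q (t - s) f x ^ 2 * lap Q (heat Q s ρ) x) * pr x) s := by
    intro s
    apply HasDerivAt.fun_sum
    intro x _
    exact (((hv_der s x).pow 2).mul (hu_der s x)).mul_const (pr x)
  -- lower bound for the derivative of Φ
  have hΦD_ge : ∀ s ∈ Set.Icc (0:ℝ) t,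
      2 * a s ≤ ∑ x, (((2:ℕ):ℝ) * heat Q (t - s) f x ^ 1 * (-(lap Q (heat Q (t - s) f) x))
          * heat Q s ρ x + heat Q (t - s) f x ^ 2 * lap Q (heat Q s ρ) x) * pr x := by
    intro s hs
    set U : X → ℝ := heat Q s ρ with hUdef
    set V : X → ℝ := heat Q (t - s) f with hVdef
    have hU0 : ∀ x, (0:ℝ) ≤ U x := fun x => (hupos s hs.1 x).le
    have step1 : (∑ x, (((2:ℕ):ℝ) * V x ^ 1 * (-(lap Q V x)) * U x
          + V x ^ 2 * lap Q U x) * pr x)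
        = (∑ x, lap Q (fun z => V z ^ 2) x * U x * pr x)
          - 2 * ∑ x, V x * lap Q V x * U x * pr x := by
      rw [lap_symm Q pr hrev (fun z => V z ^ 2) U, Finset.mul_sum, ← Finset.sum_sub_distrib]
      refine Finset.sum_congr rfl fun x _ => ?_
      try simp only []
      push_cast
      ring
    have step2 : (∑ x, lap Q (fun z => V z ^ 2) x * U x * pr x)
          - 2 * ∑ x, V x * lap Q V x * U x * pr x
        = ∑ x, ∑ y, U x * (V y - V x)^2 * Q x y * pr x := by
      rw [Finset.mul_sum, ← Finset.sum_sub_distrib]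
      refine Finset.sum_congr rfl fun x _ => ?_
      have h := lap_sq Q V x
      have h2 : ∑ y, U x * (V y - V x)^2 * Q x y * pr x
          = (∑ y, Q x y * (V y - V x)^2) * (U x * pr x) := by
        rw [Finset.sum_mul]
        exact Finset.sum_congr rfl fun y _ => by ring
      rw [h2, ← h]
      ring
    have key : ∑ x, ∑ y, U x * (V y - V x)^2 * Q x y * pr x
        = ∑ x, ∑ y, U y * (V y - V x)^2 * Q x y * pr x := by
      rw [swap_sum Q pr hrev (fun x y => U x * (V y - V x)^2)]
      exact Finset.sum_congr rfl fun x _ => Finset.sum_congr rfl fun y _ => by ring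
    have ha2 : 2 * a s = ∑ x, ∑ y, θ (U x) (U y) * (V y - V x)^2 * Q x y * pr x := by
      rw [ha_def]
      simp only [Afun]
      ring
    have h1 : ∑ x, ∑ y, θ (U x) (U y) * (V y - V x)^2 * Q x y * pr x
        ≤ ∑ x, ∑ y, ((U x + U y)/2) * (V y - V x)^2 * Q x y * pr x := by
      refine Finset.sum_le_sum fun x _ => Finset.sum_le_sum fun y _ => ?_
      have hθ := hθa (U x) (U y) (hU0 x) (hU0 y)
      have hfac : (0:ℝ) ≤ (V y - V x)^2 * Q x y * pr x :=
        mul_nonneg (mul_nonneg (sq_nonneg _) (hQ x y)) (hpr x).le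
      calc θ (U x) (U y) * (V y - V x)^2 * Q x y * pr x
          = θ (U x) (U y) * ((V y - V x)^2 * Q x y * pr x) := by ring
        _ ≤ (U x + U y)/2 * ((V y - V x)^2 * Q x y * pr x) :=
            mul_le_mul_of_nonneg_right hθ hfac
        _ = ((U x + U y)/2) * (V y - V x)^2 * Q x y * pr x := by ring
    have h2 : ∑ x, ∑ y, ((U x + U y)/2) * (V y - V x)^2 * Q x y * pr x
        = ∑ x, ∑ y, U x * (V y - V x)^2 * Q x y * pr x := by
      have e : ∀ (p q : X → X → ℝ), (1/2) * ((∑ x, ∑ y, p x y) + ∑ x, ∑ y, q x y)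
          = ∑ x, ∑ y, (1/2) * (p x y + q x y) := by
        intro p q
        rw [← Finset.sum_add_distrib, Finset.mul_sum]
        refine Finset.sum_congr rfl fun x _ => ?_
        rw [← Finset.sum_add_distrib, Finset.mul_sum]
      have e2 : ∑ x, ∑ y, ((U x + U y)/2) * (V y - V x)^2 * Q x y * pr x
          = (1/2) * ((∑ x, ∑ y, U x * (V y - V x)^2 * Q x y * pr x)
            + ∑ x, ∑ y, U y * (V y - V x)^2 * Q x y * pr x) := by
        rw [e]
        exact Finset.sum_congr rfl fun x _ => Finset.sum_congr rfl fun y _ => by ring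
      rw [e2, ← key]
      ring
    rw [step1, step2, ha2]
    exact h1.trans_eq h2
  -- CD inequality along the flow
  have hB_ge : ∀ s ∈ Set.Icc (0:ℝ) t,
      2 * Bfun Q pr θ (heat Q s ρ) (heat Q (t - s) f) ≥ 2*K*(a s) + 2*ν*(gfn s) := by
    intro s hs
    have := hCD (heat Q s ρ) (hupos s hs.1) (heat Q (t - s) f)
    rw [ha_def, hg_def]
    try simp only []
    linarith [this]
  -- Jensen: gfn s ≥ G
  have hg_ge : ∀ s ∈ Set.Icc (0:ℝ) t, G ≤ gfn s := by
    intro s hs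
    rw [hg_def]
    try simp only []
    set w : X → ℝ := lap Q (heat Q (t - s) f) with hwdef
    have h1 : ∑ x, heat Q s ρ x * w x ^ 2 * pr x
        = ∑ x, ρ x * heat Q s (fun z => w z ^ 2) x * pr x := by
      have h := heat_symm Q pr hrev s ρ (fun z => w z ^ 2)
      simpa using h
    rw [h1]
    have h3 : heat Q s w = lap Q (heat Q t f) := by
      rw [hwdef, ← lap_heat, heat_heat, show s + (t - s) = t by ring]
    have h4 : G = ∑ x, ρ x * (heat Q s w x)^2 * pr x := by
      rw [hG, h3]
    rw [h4]
    refine Finset.sum_le_sum fun x _ => ?_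
    have h5 := heat_sq_le Q hQ hQrow hs.1 w x
    have h6 := mul_le_mul_of_nonneg_left h5 (hρ x).le
    exact mul_le_mul_of_nonneg_right h6 (hpr x).le
  -- Gronwall step: a s ≥ e^{2Ks} A₀ + 2 ν G c s on [0,t]
  have ha_lower : ∀ s ∈ Set.Icc (0:ℝ) t,
      Real.exp (2*K*s) * A₀ + 2*ν*G*(c s) ≤ a s := by
    have hc0 : c 0 = 0 := by rw [hc_def]; simp
    have ha0 : a 0 = A₀ := by
      rw [ha_def, hA₀]
      simp only [sub_zero]
      rw [heat_zero]
    have hFA : ∀ s ∈ Set.Icc (0:ℝ) t,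
        HasDerivAt (fun r => Real.exp (-(2*K*r)) * (a r - 2*ν*G*(c r)) - A₀)
          (Real.exp (-(2*K*s)) * (-(2*K)) * (a s - 2*ν*G*(c s))
            + Real.exp (-(2*K*s)) * (2 * Bfun Q pr θ (heat Q s ρ) (heat Q (t - s) f)
              - 2*ν*G*Real.exp (2*K*s))) s := by
      intro s hs
      have hlin : HasDerivAt (fun r : ℝ => -(2*K*r)) (-(2*K)) s := by
        simpa using ((hasDerivAt_id s).const_mul (2*K)).fun_neg
      have hexp : HasDerivAt (fun r : ℝ => Real.exp (-(2*K*r)))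
          (Real.exp (-(2*K*s)) * (-(2*K))) s := hlin.exp
      have hc' : HasDerivAt c (Real.exp (2*K*s)) s := by
        rw [hc_def]; exact hasDerivAt_cInt K s
      have hin : HasDerivAt (fun r => a r - 2*ν*G*(c r))
          (2 * Bfun Q pr θ (heat Q s ρ) (heat Q (t - s) f) - 2*ν*G*Real.exp (2*K*s)) s :=
        (ha s hs).sub (hc'.const_mul (2*ν*G))
      exact (hexp.mul hin).sub_const A₀
    have hFA' : ∀ s ∈ Set.Icc (0:ℝ) t,
        0 ≤ Real.exp (-(2*K*s)) * (-(2*K)) * (a s - 2*ν*G*(c s))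
            + Real.exp (-(2*K*s)) * (2 * Bfun Q pr θ (heat Q s ρ) (heat Q (t - s) f)
              - 2*ν*G*Real.exp (2*K*s)) := by
      intro s hs
      have h1 := hB_ge s hs
      have h2 := hg_ge s hs
      have h3 : 2*K*(c s) = Real.exp (2*K*s) - 1 := by
        rw [hc_def]; exact cInt_identity K s
      have h4 : 2*ν*G*(2*K*(c s)) = 2*ν*G*(Real.exp (2*K*s) - 1) := by rw [h3]
      have hgν : ν * G ≤ ν * gfn s := mul_le_mul_of_nonneg_left h2 hν
      have hX : 0 ≤ (-(2*K)) * (a s - 2*ν*G*(c s))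
          + (2 * Bfun Q pr θ (heat Q s ρ) (heat Q (t - s) f) - 2*ν*G*Real.exp (2*K*s)) := by
        nlinarith [h1, h4, hgν]
      have hE : 0 ≤ Real.exp (-(2*K*s)) := (Real.exp_pos _).le
      have hre : Real.exp (-(2*K*s)) * (-(2*K)) * (a s - 2*ν*G*(c s))
            + Real.exp (-(2*K*s)) * (2 * Bfun Q pr θ (heat Q s ρ) (heat Q (t - s) f)
              - 2*ν*G*Real.exp (2*K*s))
          = Real.exp (-(2*K*s)) * ((-(2*K)) * (a s - 2*ν*G*(c s))
            + (2 * Bfun Q pr θ (heat Q s ρ) (heat Q (t - s) f)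
              - 2*ν*G*Real.exp (2*K*s))) := by ring
      rw [hre]
      exact mul_nonneg hE hX
    have hmono := mono_of_deriv hFA hFA'
    intro s hs
    have h0 := hmono s hs
    try simp only [] at h0
    have hz : Real.exp (-(2*K*0)) * (a 0 - 2*ν*G*(c 0)) - A₀ = 0 := by
      rw [hc0, ha0]; norm_num
    rw [hz] at h0
    have hEpos : 0 < Real.exp (2*K*s) := Real.exp_pos _
    have hinv : Real.exp (-(2*K*s)) = (Real.exp (2*K*s))⁻¹ := Real.exp_neg _
    rw [hinv] at h0
    have h1 : A₀ ≤ (Real.exp (2*K*s))⁻¹ * (a s - 2*ν*G*(c s)) := by linarith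
    have h2 := mul_le_mul_of_nonneg_left h1 hEpos.le
    rw [← mul_assoc, mul_inv_cancel₀ (ne_of_gt hEpos), one_mul] at h2
    linarith
  -- final integration step
  have hfinal : Φ 0 + (2 * A₀ * c t + 4*ν*G*(c2 t)) ≤ Φ t := by
    have hc0 : c 0 = 0 := by rw [hc_def]; simp
    have hc20 : c2 0 = 0 := by rw [hc2_def]; simp
    have hΨder : ∀ s ∈ Set.Icc (0:ℝ) t,
        HasDerivAt (fun r => Φ r - 2*A₀*(c r) - 4*ν*G*(c2 r))
          ((∑ x, (((2:ℕ):ℝ) * heat Q (t - s) f x ^ 1 * (-(lap Q (heat Q (t - s) f) x))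
            * heat Q s ρ x + heat Q (t - s) f x ^ 2 * lap Q (heat Q s ρ) x) * pr x)
           - 2*A₀*Real.exp (2*K*s) - 4*ν*G*(c s)) s := by
      intro s hs
      have hc' : HasDerivAt c (Real.exp (2*K*s)) s := by
        rw [hc_def]; exact hasDerivAt_cInt K s
      have hc2' : HasDerivAt c2 (c s) s := by
        rw [hc2_def, hc_def]; exact hasDerivAt_c2Int K s
      exact ((hΦder s).sub (hc'.const_mul (2*A₀))).sub (hc2'.const_mul (4*ν*G))
    have hΨ' : ∀ s ∈ Set.Icc (0:ℝ) t,
        0 ≤ (∑ x, (((2:ℕ):ℝ) * heat Q (t - s) f x ^ 1 * (-(lap Q (heat Q (t - s) f) x))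
            * heat Q s ρ x + heat Q (t - s) f x ^ 2 * lap Q (heat Q s ρ) x) * pr x)
           - 2*A₀*Real.exp (2*K*s) - 4*ν*G*(c s) := by
      intro s hs
      have h1 := hΦD_ge s hs
      have h2 := ha_lower s hs
      linarith
    have hmono := mono_of_deriv hΨder hΨ'
    have hend := hmono t (Set.right_mem_Icc.2 ht)
    try simp only [] at hend
    rw [hc0, hc20] at hend
    linarith
  -- translate to the goal
  have hΦt : Φ t = ∑ x, (f x)^2 * heat Q t ρ x * pr x := by
    rw [hΦ_def]
    simp only [sub_self]
    rw [heat_zero]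
  have hΦ0 : Φ 0 = ∑ x, (heat Q t f x)^2 * ρ x * pr x := by
    rw [hΦ_def]
    simp only [sub_zero]
    rw [heat_zero]
  rw [hΦt, hΦ0] at hfinal
  rw [hc_def] at hfinal
  rw [hc2_def] at hfinal
  try simp only [] at hfinal
  nlinarith [hfinal]

end Main

lemma heat_add_const {X : Type*} [Fintype X] [DecidableEq X]
    (Q : X → X → ℝ) (hQrow : ∀ x, ∑ y, Q x y = 1) (t : ℝ) (ρ : X → ℝ) (ε : ℝ) :
    heat Q t (fun x => ρ x + ε) = fun x => heat Q t ρ x + ε := by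
  have h1 : (fun x => ρ x + ε) = ρ + ε • (fun _ => (1:ℝ)) := by
    funext x; simp
  have h2 : heat Q t (fun x => ρ x + ε)
      = heat Q t ρ + ε • heat Q t (fun _ => (1:ℝ)) := by
    rw [h1, heat_def, heat_def, heat_def, map_add, map_smul]
  rw [h2, heat_one Q hQrow]
  funext x
  simp

/-- Reverse Poincaré inequality under `CD_θ(K,n)` for a mean with `θ ≤ θ_a`:
`⟨f², P_tρ⟩_π - ⟨(P_t f)², ρ⟩_π ≥ (2∫₀ᵗ e^{2Ks} ds) A_ρ(P_t f)
  + (4ν ∫₀ᵗ∫₀ˢ e^{2Ku} du ds) ⟨ρ, (Δ P_t f)²⟩_π`. -/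
theorem reverse_poincare
    {X : Type*} [Fintype X] [DecidableEq X]
    (Q : X → X → ℝ) (pr : X → ℝ)
    (hQ : ∀ x y, 0 ≤ Q x y) (hQrow : ∀ x, ∑ y, Q x y = 1)
    (hpr : ∀ x, 0 < pr x) (hprsum : ∑ x, pr x = 1)
    (hrev : ∀ x y, pr x * Q x y = pr y * Q y x)
    (θ : ℝ → ℝ → ℝ) (hθ : IsMean θ) (Iθ : Set ℝ) (hI : MeanDom θ Iθ)
    (hθa : ∀ r s : ℝ, 0 ≤ r → 0 ≤ s → θ r s ≤ (r + s) / 2)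
    (K : ℝ) (ν : ℝ) (hν : 0 ≤ ν)
    (hCD : ∀ ρ : X → ℝ, (∀ x, ρ x ∈ Iθ) → ∀ f : X → ℝ,
      Bfun Q pr θ ρ f ≥ K * Afun Q pr θ ρ f + ν * ∑ x, ρ x * (lap Q f x)^2 * pr x) :
    ∀ ρ : X → ℝ, (∀ x, ρ x ∈ Iθ) → ∀ f : X → ℝ, ∀ t : ℝ, 0 ≤ t →
      (∑ x, (f x)^2 * heat Q t ρ x * pr x) - (∑ x, (heat Q t f x)^2 * ρ x * pr x)
        ≥ (2 * ∫ s in (0:ℝ)..t, Real.exp (2*K*s)) * Afun Q pr θ ρ (heat Q t f)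
          + (4 * ν * ∫ s in (0:ℝ)..t, ∫ u in (0:ℝ)..s, Real.exp (2*K*u))
              * ∑ x, ρ x * (lap Q (heat Q t f) x)^2 * pr x := by
  intro ρ hρmem f t ht
  obtain ⟨hzero, hIeq⟩ | ⟨hposI, hIeq, hC1⟩ := hI
  · -- the domain is `(0,∞)` : apply the positive case directly
    subst hIeq
    exact reverse_poincare_pos Q pr hQ hQrow hpr hrev θ hθ.2.2.1 hθ.2.2.2.1 hθa K ν hν
      (fun ρ' hρ' f' => hCD ρ' (fun x => hρ' x) f') ρ (fun x => hρmem x) f t ht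
  · -- the domain is `[0,∞)` : approximate `ρ` by `ρ + ε` and take `ε → 0⁺`
    subst hIeq
    have hρ0 : ∀ x, 0 ≤ ρ x := fun x => hρmem x
    set L : Filter ℝ := nhdsWithin 0 (Set.Ioi 0) with hL
    -- the inequality for each ε > 0
    have hineq : ∀ ε : ℝ, ε ∈ Set.Ioi (0:ℝ) →
        (2 * ∫ s in (0:ℝ)..t, Real.exp (2*K*s))
            * Afun Q pr θ (fun x => ρ x + ε) (heat Q t f)
          + (4 * ν * ∫ s in (0:ℝ)..t, ∫ u in (0:ℝ)..s, Real.exp (2*K*u))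
              * ∑ x, (ρ x + ε) * (lap Q (heat Q t f) x)^2 * pr x
        ≤ (∑ x, (f x)^2 * (heat Q t ρ x + ε) * pr x)
            - (∑ x, (heat Q t f x)^2 * (ρ x + ε) * pr x) := by
      intro ε hε
      have hε' : (0:ℝ) < ε := hε
      have h := reverse_poincare_pos Q pr hQ hQrow hpr hrev θ hθ.2.2.1 hθ.2.2.2.1 hθa K ν hν
        (fun ρ' hρ' f' => hCD ρ' (fun x => le_of_lt (hρ' x)) f')
        (fun x => ρ x + ε) (fun x => add_pos_of_nonneg_of_pos (hρ0 x) hε') f t ht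
      simp only [heat_add_const Q hQrow] at h
      exact h
    -- limits of both sides as ε → 0⁺
    have hLne : L.NeBot := nhdsGT_neBot 0
    -- limit of the Afun term
    have hAtend : Filter.Tendsto (fun ε => Afun Q pr θ (fun x => ρ x + ε) (heat Q t f)) L
        (nhds (Afun Q pr θ ρ (heat Q t f))) := by
      simp only [Afun]
      apply Filter.Tendsto.const_mul
      apply tendsto_finset_sum
      intro x _
      apply tendsto_finset_sum
      intro y _
      have hθtend : Filter.Tendsto (fun ε => θ (ρ x + ε) (ρ y + ε)) L
          (nhds (θ (ρ x) (ρ y))) := by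
        have hcw : ContinuousWithinAt (fun p : ℝ × ℝ => θ p.1 p.2)
            (Set.Ici 0 ×ˢ Set.Ici 0) (ρ x, ρ y) := hθ.2.1 _ ⟨hρ0 x, hρ0 y⟩
        have hmap : Filter.Tendsto (fun ε => (ρ x + ε, ρ y + ε)) L
            (nhdsWithin (ρ x, ρ y) (Set.Ici 0 ×ˢ Set.Ici 0)) := by
          rw [tendsto_nhdsWithin_iff]
          constructor
          · have hcont : Filter.Tendsto (fun ε : ℝ => (ρ x + ε, ρ y + ε)) (nhds 0)
                (nhds (ρ x + 0, ρ y + 0)) :=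
              ((continuous_const.add continuous_id).prodMk
                (continuous_const.add continuous_id)).tendsto 0
            rw [add_zero, add_zero] at hcont
            exact hcont.mono_left nhdsWithin_le_nhds
          · filter_upwards [eventually_mem_nhdsWithin] with ε hε
            exact ⟨le_add_of_nonneg_of_le (hρ0 x) (le_of_lt hε),
              le_add_of_nonneg_of_le (hρ0 y) (le_of_lt hε)⟩
        have := hcw.tendsto.comp hmap
        simpa [Function.comp_def] using this
      exact ((hθtend.mul_const _).mul_const _).mul_const _
    -- limit of the second (linear) term
    have hGtend : Filter.Tendsto (fun ε => ∑ x, (ρ x + ε) * (lap Q (heat Q t f) x)^2 * pr x) L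
        (nhds (∑ x, ρ x * (lap Q (heat Q t f) x)^2 * pr x)) := by
      have hcont : Continuous fun ε : ℝ => ∑ x, (ρ x + ε) * (lap Q (heat Q t f) x)^2 * pr x := by
        apply continuous_finset_sum
        intro x _
        exact ((continuous_const.add continuous_id).mul continuous_const).mul continuous_const
      have := hcont.tendsto 0
      simp only [add_zero] at this
      exact this.mono_left nhdsWithin_le_nhds
    -- limit of the left-hand side
    have hLtend : Filter.Tendsto (fun ε => (∑ x, (f x)^2 * (heat Q t ρ x + ε) * pr x)
          - (∑ x, (heat Q t f x)^2 * (ρ x + ε) * pr x)) L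
        (nhds ((∑ x, (f x)^2 * heat Q t ρ x * pr x)
          - (∑ x, (heat Q t f x)^2 * ρ x * pr x))) := by
      have hcont : Continuous fun ε : ℝ => (∑ x, (f x)^2 * (heat Q t ρ x + ε) * pr x)
          - (∑ x, (heat Q t f x)^2 * (ρ x + ε) * pr x) := by
        apply Continuous.sub
        · apply continuous_finset_sum
          intro x _
          exact (continuous_const.mul (continuous_const.add continuous_id)).mul continuous_const
        · apply continuous_finset_sum
          intro x _
          exact (continuous_const.mul (continuous_const.add continuous_id)).mul continuous_const
      have := hcont.tendsto 0
      simp only [add_zero] at this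
      exact this.mono_left nhdsWithin_le_nhds
    -- combine
    have hRtend : Filter.Tendsto (fun ε =>
        (2 * ∫ s in (0:ℝ)..t, Real.exp (2*K*s))
            * Afun Q pr θ (fun x => ρ x + ε) (heat Q t f)
          + (4 * ν * ∫ s in (0:ℝ)..t, ∫ u in (0:ℝ)..s, Real.exp (2*K*u))
              * ∑ x, (ρ x + ε) * (lap Q (heat Q t f) x)^2 * pr x) L
        (nhds ((2 * ∫ s in (0:ℝ)..t, Real.exp (2*K*s)) * Afun Q pr θ ρ (heat Q t f)
          + (4 * ν * ∫ s in (0:ℝ)..t, ∫ u in (0:ℝ)..s, Real.exp (2*K*u))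
              * ∑ x, ρ x * (lap Q (heat Q t f) x)^2 * pr x)) :=
      (hAtend.const_mul _).add (hGtend.const_mul _)
    exact le_of_tendsto_of_tendsto hRtend hLtend
      (by filter_upwards [eventually_mem_nhdsWithin] with ε hε using hineq ε hε)
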